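/- arXiv:1902.09512 — 4 statements merged into one kernel-verified Lean document; each statement's English description precedes it below -/
import Mathlib

section
/- Let N ≥ 1 and K ≥ 1 be integers, let m = (m_1, …, m_N) satisfy 0 ≤ m_n ≤ 1 for all n, put m_s = ∑_{n=1}^N m_n, and let j be an integer with 2 ≤ j ≤ N and j − 1 ≤ m_s ≤ j. Then D*(m) = (j − m_s)·D̃_{j−1} + (m_s − j + 1)·D̃_j; that is, there exists a feasible α for P(m) whose objective value equals this quantity, and every feasible α for P(m) has objective value at least this quantity. -/
open Finset

/-- `D̃_ℓ = ∑_{i=0}^{K-1} (1/ℓ)^i`. -/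
noncomputable def Dt (K ℓ : ℕ) : ℝ := ∑ i ∈ Finset.range K, (1 / (ℓ : ℝ)) ^ i

/-- Feasibility for the placement linear program `P(m)`. -/
def PFeasible {N : ℕ} (m : Fin N → ℝ) (α : Finset (Fin N) → ℝ) : Prop :=
  (∀ S : Finset (Fin N), S.Nonempty → 0 ≤ α S) ∧
  (∑ S ∈ Finset.univ.filter (fun S : Finset (Fin N) => S.Nonempty), α S) = 1 ∧
  ∀ n : Fin N, (∑ S ∈ Finset.univ.filter (fun S : Finset (Fin N) => n ∈ S), α S) ≤ m n

/-- Objective value of the placement LP: `∑_S α_S · D̃_{|S|}`. -/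
noncomputable def PObj (N K : ℕ) (α : Finset (Fin N) → ℝ) : ℝ :=
  ∑ S ∈ Finset.univ.filter (fun S : Finset (Fin N) => S.Nonempty), α S * Dt K S.card

/-! The map `ℓ ↦ D̃_ℓ = ∑ᵢ ℓ^(-i)` is convex and decreasing, so at every integer `ℓ ≥ 1` it lies
above the secant line `L` through `ℓ = j - 1` and `ℓ = j`, and `L` is decreasing. Averaging over a
feasible `α` gives `∑_S α_S D̃_{|S|} ≥ L(∑_S α_S |S|) ≥ L(m_s)`, because
`∑_S α_S |S| = ∑_n ∑_{S ∋ n} α_S ≤ m_s`; and `L(m_s)` is the claimed value. Equality holds for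
any distribution on sets of size `j - 1` or `j` with marginals exactly `m`. One exists because
the polytope `{x ∈ [0,1]^N | j - 1 ≤ ∑ x ≤ j}` has only 0/1 extreme points, so by Krein–Milman
`m` is a convex combination of indicator vectors of such sets. -/

theorem ConvexOn.secant_le_of_notMem_Ioo {s : Set ℝ} {f : ℝ → ℝ} (hf : ConvexOn ℝ s f)
    {a b x : ℝ} (ha : a ∈ s) (hb : b ∈ s) (hx : x ∈ s) (hab : a < b) (hxab : x ∉ Set.Ioo a b) :
    f a + (x - a) * ((f b - f a) / (b - a)) ≤ f x := by
  set σ := (f b - f a) / (b - a)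
  have hσ : f b - f a = σ * (b - a) := (div_mul_cancel₀ _ (sub_pos.2 hab).ne').symm
  rcases le_or_gt x a with hxa | hax
  · rcases hxa.eq_or_lt with rfl | hxa
    · simp
    have hslope := hf.secant_mono hb hx ha (by linarith) hab.ne (by linarith)
    rw [show (f a - f b) / (a - b) = σ by rw [← neg_div_neg_eq]; simp [σ],
      div_le_iff_of_neg (by linarith)] at hslope
    linarith
  · have hbx : b ≤ x := by
      by_contra h
      exact hxab ⟨hax, by linarith⟩
    have hslope := hf.secant_mono ha hb hx hab.ne' (by linarith) hbx
    rw [le_div_iff₀ (by linarith)] at hslope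
    linarith

theorem convexOn_sum_zpow_neg (K : ℕ) :
    ConvexOn ℝ (Set.Ioi 0) (fun x : ℝ => ∑ i ∈ range K, x ^ (-(i : ℤ))) := by
  induction K with
  | zero => simpa using convexOn_const (0 : ℝ) (convex_Ioi 0)
  | succ K ih =>
    simp only [sum_range_succ]
    exact ih.add (convexOn_zpow _)

theorem Dt_eq_sum_zpow_neg (K ℓ : ℕ) : Dt K ℓ = ∑ i ∈ range K, (ℓ : ℝ) ^ (-(i : ℤ)) := by
  simp [Dt, zpow_neg]

theorem Dt_le_Dt_of_le (K : ℕ) {k ℓ : ℕ} (hk : 1 ≤ k) (hkℓ : k ≤ ℓ) : Dt K ℓ ≤ Dt K k := by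
  unfold Dt
  gcongr

noncomputable def dtSecant (K k : ℕ) (x : ℝ) : ℝ := Dt K k + (x - k) * (Dt K (k + 1) - Dt K k)

theorem dtSecant_le_Dt (K : ℕ) {k ℓ : ℕ} (hk : 1 ≤ k) (hℓ : 1 ≤ ℓ) :
    dtSecant K k ℓ ≤ Dt K ℓ := by
  have hIoo : (ℓ : ℝ) ∉ Set.Ioo (k : ℝ) (k + 1 : ℕ) := fun ⟨h₁, h₂⟩ => by
    have : k < ℓ := by exact_mod_cast h₁
    have : ℓ < k + 1 := by exact_mod_cast h₂
    omega
  have := (convexOn_sum_zpow_neg K).secant_le_of_notMem_Ioo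
    (Set.mem_Ioi.2 (Nat.cast_pos.2 hk)) (Set.mem_Ioi.2 (Nat.cast_pos.2 k.succ_pos))
    (Set.mem_Ioi.2 (Nat.cast_pos.2 hℓ)) (by simp) hIoo
  simpa [dtSecant, Dt_eq_sum_zpow_neg] using this

theorem dtSecant_antitone (K : ℕ) {k : ℕ} (hk : 1 ≤ k) : Antitone (dtSecant K k) :=
  fun x y hxy => by
    have := mul_le_mul_of_nonpos_right (sub_le_sub_right hxy (k : ℝ))
      (sub_nonpos.2 (Dt_le_Dt_of_le K hk k.le_succ))
    unfold dtSecant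
    linarith

theorem sum_mul_dtSecant {β : Type*} (K k : ℕ) {s : Finset β} {w c : β → ℝ}
    (hw : ∑ i ∈ s, w i = 1) :
    ∑ i ∈ s, w i * dtSecant K k (c i) = dtSecant K k (∑ i ∈ s, w i * c i) := by
  simp only [dtSecant, mul_add, sum_add_distrib, ← sum_mul, ← mul_assoc, mul_sub,
    sum_sub_distrib, hw]
  ring

theorem notMem_extremePoints_of_add_mem_of_sub_mem {E : Type*} [AddCommGroup E] [Module ℝ E]
    {A : Set E} {x v : E} (hv : v ≠ 0) (hadd : x + v ∈ A) (hsub : x - v ∈ A) :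
    x ∉ A.extremePoints ℝ := fun hx =>
  hv <| by
    simpa using hx.2 hadd hsub ⟨1 / 2, 1 / 2, by norm_num, by norm_num, by norm_num, by module⟩

def unitCubeSlab (ι : Type*) [Fintype ι] (a b : ℝ) : Set (ι → ℝ) :=
  Set.univ.pi (fun _ => Set.Icc 0 1) ∩ {x | ∑ i, x i ∈ Set.Icc a b}

section UnitCubeSlab

variable {ι : Type*} [Fintype ι]

theorem convex_unitCubeSlab (a b : ℝ) : Convex ℝ (unitCubeSlab ι a b) :=
  (convex_pi fun _ _ => convex_Icc 0 1).inter <| (convex_Icc a b).is_linear_preimage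
    ⟨fun _ _ => sum_add_distrib, fun _ _ => (mul_sum _ _ _).symm⟩

theorem isCompact_unitCubeSlab (a b : ℝ) : IsCompact (unitCubeSlab ι a b) :=
  (isCompact_univ_pi fun _ => isCompact_Icc).inter_right <|
    isClosed_Icc.preimage (continuous_finsetSum _ fun i _ => continuous_apply i)

theorem notMem_extremePoints_unitCubeSlab {a b : ℝ} {x v : ι → ℝ} (hv : v ≠ 0)
    (hbox : ∀ i, |v i| ≤ x i ∧ |v i| ≤ 1 - x i)
    (hsum : ∀ s ∈ ({1, -1} : Set ℝ), ∑ i, x i + s * ∑ i, v i ∈ Set.Icc a b) :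
    x ∉ (unitCubeSlab ι a b).extremePoints ℝ := by
  have hmem : ∀ s ∈ ({1, -1} : Set ℝ), x + s • v ∈ unitCubeSlab ι a b := by
    intro s hs
    refine ⟨fun i _ => ?_, by simpa [sum_add_distrib, ← mul_sum] using hsum s hs⟩
    have := hbox i
    have := neg_abs_le (v i)
    have := le_abs_self (v i)
    rcases hs with rfl | rfl <;> constructor <;> simp <;> linarith
  exact notMem_extremePoints_of_add_mem_of_sub_mem hv (by simpa using hmem 1 (by simp))
    (by simpa [sub_eq_add_neg] using hmem (-1) (by simp))

theorem notMem_extremePoints_unitCubeSlab_of_two_fractional {a b : ℝ} {x : ι → ℝ}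
    (hx : x ∈ unitCubeSlab ι a b) {p q : ι} (hpq : p ≠ q) (hp : x p ∈ Set.Ioo 0 1)
    (hq : x q ∈ Set.Ioo 0 1) : x ∉ (unitCubeSlab ι a b).extremePoints ℝ := by
  classical
  set ε := min (min (x p) (1 - x p)) (min (x q) (1 - x q))
  have hε : 0 < ε := lt_min (lt_min hp.1 (by linarith [hp.2])) (lt_min hq.1 (by linarith [hq.2]))
  have hεp : ε ≤ x p ∧ ε ≤ 1 - x p := le_min_iff.1 (min_le_left _ _)
  have hεq : ε ≤ x q ∧ ε ≤ 1 - x q := le_min_iff.1 (min_le_right _ _)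
  refine notMem_extremePoints_unitCubeSlab (v := Pi.single p ε - Pi.single q ε)
    (fun h => by simpa [hpq, hε.ne'] using congrFun h p) (fun i => ?_) ?_
  · have hxi := hx.1 i trivial
    by_cases hip : i = p
    · subst hip; simpa [hpq, abs_of_pos hε] using hεp
    by_cases hiq : i = q
    · subst hiq; simpa [Ne.symm hpq, abs_of_pos hε] using hεq
    · simpa [hip, hiq] using hxi
  · simpa [Fintype.sum_pi_single'] using hx.2

theorem notMem_extremePoints_unitCubeSlab_of_one_fractional {a b : ℤ} {x : ι → ℝ}
    (hx : x ∈ unitCubeSlab ι a b) {p : ι} (hp : x p ∈ Set.Ioo 0 1)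
    (hint : ∀ i ≠ p, x i = 0 ∨ x i = 1) : x ∉ (unitCubeSlab ι a b).extremePoints ℝ := by
  classical
  -- The other coordinates sum to an integer `c`, so `∑ x = c + x p` lies strictly inside `[a, b]`.
  set c := #{i ∈ univ.erase p | x i = 1}
  have hc : ∑ i, x i = c + x p := by
    rw [← add_sum_erase _ _ (mem_univ p), add_comm, ← sum_boole]
    congr 1
    refine sum_congr rfl fun i hi => ?_
    rcases hint i (ne_of_mem_erase hi) with h | h <;> simp [h]
  obtain ⟨hlo, hhi⟩ := hx.2
  have hac : (a : ℝ) ≤ c := by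
    have : (a : ℝ) < c + 1 := by linarith [hp.2]
    exact_mod_cast Int.lt_add_one_iff.1 (by exact_mod_cast this)
  have hcb : (c : ℝ) + 1 ≤ b := by
    have : (c : ℝ) < b := by linarith [hp.1]
    exact_mod_cast Int.add_one_le_iff.2 (show (c : ℤ) < b by exact_mod_cast this)
  set ε := min (x p) (1 - x p)
  have hε : 0 < ε := lt_min hp.1 (by linarith [hp.2])
  have hεp : ε ≤ x p ∧ ε ≤ 1 - x p := le_min_iff.1 le_rfl
  refine notMem_extremePoints_unitCubeSlab (v := Pi.single p ε)
    (fun h => by simpa [hε.ne'] using congrFun h p) (fun i => ?_) ?_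
  · by_cases hip : i = p
    · subst hip; simpa [abs_of_pos hε] using hεp
    · simpa [hip] using hx.1 i trivial
  · rintro s (rfl | rfl) <;> simp only [Fintype.sum_pi_single', hc, Set.mem_Icc] <;>
      constructor <;> linarith

theorem eq_zero_or_eq_one_of_mem_extremePoints_unitCubeSlab {a b : ℤ} {x : ι → ℝ}
    (hx : x ∈ (unitCubeSlab ι a b).extremePoints ℝ) (i : ι) : x i = 0 ∨ x i = 1 := by
  have hfrac : ∀ j, x j ≠ 0 → x j ≠ 1 → x j ∈ Set.Ioo 0 1 := fun j h₀ h₁ =>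
    have hj := hx.1.1 j trivial
    ⟨lt_of_le_of_ne hj.1 (Ne.symm h₀), lt_of_le_of_ne hj.2 h₁⟩
  by_contra! hi
  by_cases htwo : ∃ j ≠ i, x j ≠ 0 ∧ x j ≠ 1
  · obtain ⟨j, hji, hj₀, hj₁⟩ := htwo
    exact notMem_extremePoints_unitCubeSlab_of_two_fractional hx.1 hji (hfrac j hj₀ hj₁)
      (hfrac i hi.1 hi.2) hx
  · push Not at htwo
    exact notMem_extremePoints_unitCubeSlab_of_one_fractional hx.1 (hfrac i hi.1 hi.2)
      (fun j hj => or_iff_not_imp_left.2 (htwo j hj)) hx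

theorem unitCubeSlab_subset_convexHull {a b : ℤ} :
    unitCubeSlab ι a b ⊆ convexHull ℝ (unitCubeSlab ι a b ∩ {x | ∀ i, x i = 0 ∨ x i = 1}) := by
  have hext : (unitCubeSlab ι a b).extremePoints ℝ ⊆
      unitCubeSlab ι a b ∩ {x | ∀ i, x i = 0 ∨ x i = 1} := fun x hx =>
    ⟨hx.1, eq_zero_or_eq_one_of_mem_extremePoints_unitCubeSlab hx⟩
  have hfin : (unitCubeSlab ι a b ∩ {x | ∀ i, x i = 0 ∨ x i = 1}).Finite :=
    (Set.Finite.pi' fun _ => Set.toFinite {(0 : ℝ), 1}).subset fun y hy => hy.2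
  calc unitCubeSlab ι a b = closure (convexHull ℝ ((unitCubeSlab ι a b).extremePoints ℝ)) :=
        (closure_convexHull_extremePoints (isCompact_unitCubeSlab _ _)
          (convex_unitCubeSlab _ _)).symm
    _ ⊆ _ := closure_minimal (convexHull_mono hext) (hfin.isCompact_convexHull ℝ).isClosed

variable [DecidableEq ι]

def subsetMarginals (P : Finset ι → Prop) : Set (ι → ℝ) :=
  {x | ∃ α : Finset ι → ℝ, (∀ S, 0 ≤ α S) ∧ (∀ S, α S ≠ 0 → P S) ∧ ∑ S, α S = 1 ∧
    ∀ i, ∑ S with i ∈ S, α S = x i}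

theorem convex_subsetMarginals (P : Finset ι → Prop) : Convex ℝ (subsetMarginals P) := by
  rintro x ⟨α, hα₀, hαP, hα₁, hαx⟩ y ⟨β, hβ₀, hβP, hβ₁, hβy⟩ s t hs ht hst
  refine ⟨s • α + t • β, fun S => ?_, fun S hS => ?_, ?_, fun i => ?_⟩
  · have := hα₀ S; have := hβ₀ S
    simp only [Pi.add_apply, Pi.smul_apply, smul_eq_mul]
    positivity
  · by_contra hPS
    have hαS : α S = 0 := not_not.1 (mt (hαP S) hPS)
    have hβS : β S = 0 := not_not.1 (mt (hβP S) hPS)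
    simp [hαS, hβS] at hS
  · simp [sum_add_distrib, ← mul_sum, hα₁, hβ₁, hst]
  · simp [sum_add_distrib, ← mul_sum, hαx, hβy]

theorem indicator_mem_subsetMarginals {P : Finset ι → Prop} {S : Finset ι} (hP : P S) :
    (fun i => if i ∈ S then (1 : ℝ) else 0) ∈ subsetMarginals P := by
  refine ⟨Pi.single S 1, fun T => ?_, fun T hT => ?_, by simp, fun i => ?_⟩
  · by_cases h : T = S <;> simp [h]
  · by_cases h : T = S
    · exact h ▸ hP
    · simp [h] at hT
  · simp [sum_pi_single']

theorem unitCubeSlab_subset_subsetMarginals (a b : ℤ) :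
    unitCubeSlab ι a b ⊆ subsetMarginals (fun S => (#S : ℝ) ∈ Set.Icc (a : ℝ) b) := by
  classical
  refine unitCubeSlab_subset_convexHull.trans <| convexHull_min ?_ (convex_subsetMarginals _)
  rintro y ⟨hyQ, hy⟩
  have hyS : y = fun i => if i ∈ ({i | y i = 1} : Finset ι) then 1 else 0 := by
    ext i
    rcases hy i with h | h <;> simp [h]
  rw [hyS] at hyQ ⊢
  refine indicator_mem_subsetMarginals ?_
  simpa [sum_boole] using hyQ.2

theorem sum_nonempty_mul_card (α : Finset ι → ℝ) :
    ∑ S ∈ univ.filter (fun S : Finset ι => S.Nonempty), α S * #S =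
      ∑ i, ∑ S ∈ univ.filter (fun S : Finset ι => i ∈ S), α S := by
  rw [sum_filter_of_ne fun S _ h => nonempty_iff_ne_empty.2 fun hS => by simp [hS] at h]
  simp only [card_eq_sum_ones, Nat.cast_sum, Nat.cast_one, mul_sum, mul_one]
  exact sum_comm' fun S i => by simp

end UnitCubeSlab

theorem dtSecant_le_PObj {N K k : ℕ} (hk : 1 ≤ k) {m : Fin N → ℝ} {α : Finset (Fin N) → ℝ}
    (hα : PFeasible m α) : dtSecant K k (∑ n, m n) ≤ PObj N K α := by
  obtain ⟨hα₀, hα₁, hαm⟩ := hα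
  calc dtSecant K k (∑ n, m n)
      ≤ dtSecant K k (∑ S ∈ univ.filter (fun S : Finset (Fin N) => S.Nonempty), α S * #S) :=
        dtSecant_antitone K hk <| (sum_nonempty_mul_card α).trans_le (sum_le_sum fun n _ => hαm n)
    _ = ∑ S ∈ univ.filter (fun S : Finset (Fin N) => S.Nonempty), α S * dtSecant K k #S :=
        (sum_mul_dtSecant K k hα₁).symm
    _ ≤ PObj N K α := sum_le_sum fun S hS =>
        have hS := (mem_filter.1 hS).2
        mul_le_mul_of_nonneg_left (dtSecant_le_Dt K hk (card_pos.2 hS)) (hα₀ S hS)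

theorem PObj_eq_dtSecant {N K k : ℕ} {α : Finset (Fin N) → ℝ}
    (hα₁ : ∑ S ∈ univ.filter (fun S : Finset (Fin N) => S.Nonempty), α S = 1)
    (hsupp : ∀ S, α S ≠ 0 → #S = k ∨ #S = k + 1) :
    PObj N K α =
      dtSecant K k (∑ S ∈ univ.filter (fun S : Finset (Fin N) => S.Nonempty), α S * #S) := by
  rw [← sum_mul_dtSecant K k hα₁, PObj]
  refine sum_congr rfl fun S _ => ?_
  by_cases h : α S = 0
  · simp [h]
  · rcases hsupp S h with hS | hS <;> simp [hS, dtSecant]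

theorem exists_PFeasible_PObj_eq_dtSecant {N K k : ℕ} (hk : 1 ≤ k) {m : Fin N → ℝ}
    (hm : ∀ n, 0 ≤ m n ∧ m n ≤ 1) (hlo : (k : ℝ) ≤ ∑ n, m n) (hhi : ∑ n, m n ≤ k + 1) :
    ∃ α, PFeasible m α ∧ PObj N K α = dtSecant K k (∑ n, m n) := by
  obtain ⟨α, hα₀, hαcard, hα₁, hαm⟩ := unitCubeSlab_subset_subsetMarginals (k : ℤ) (k + 1)
    ⟨fun n _ => hm n, by push_cast; exact ⟨hlo, hhi⟩⟩
  have hsupp : ∀ S, α S ≠ 0 → #S = k ∨ #S = k + 1 := fun S hS => by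
    obtain ⟨h₁, h₂⟩ := hαcard S hS
    have : k ≤ #S := by exact_mod_cast h₁
    have : #S ≤ k + 1 := by exact_mod_cast h₂
    omega
  have hα₁' : ∑ S ∈ univ.filter (fun S : Finset (Fin N) => S.Nonempty), α S = 1 := by
    rw [sum_filter_of_ne fun S _ hS => card_pos.1 (by rcases hsupp S hS with h | h <;> omega)]
    exact hα₁
  refine ⟨α, ⟨fun S _ => hα₀ S, hα₁', fun n => (hαm n).le⟩, ?_⟩
  rw [PObj_eq_dtSecant hα₁' hsupp, sum_nonempty_mul_card]
  simp only [hαm]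

theorem Dstar_value_general (N K : ℕ)
    (m : Fin N → ℝ) (hm : ∀ n, 0 ≤ m n ∧ m n ≤ 1)
    (j : ℕ) (hj2 : 2 ≤ j)
    (hlo : (j : ℝ) - 1 ≤ ∑ n, m n) (hhi : ∑ n, m n ≤ (j : ℝ)) :
    (∃ α : Finset (Fin N) → ℝ, PFeasible m α ∧
      PObj N K α = ((j : ℝ) - ∑ n, m n) * Dt K (j - 1)
        + ((∑ n, m n) - (j : ℝ) + 1) * Dt K j) ∧
    (∀ α : Finset (Fin N) → ℝ, PFeasible m α →
      ((j : ℝ) - ∑ n, m n) * Dt K (j - 1)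
        + ((∑ n, m n) - (j : ℝ) + 1) * Dt K j ≤ PObj N K α) := by
  obtain ⟨k, rfl⟩ : ∃ k, j = k + 1 := ⟨j - 1, by omega⟩
  have hk : 1 ≤ k := by omega
  have hvalue : ∀ x : ℝ, ((k + 1 : ℕ) - x) * Dt K (k + 1 - 1) + (x - (k + 1 : ℕ) + 1) * Dt K (k + 1)
      = dtSecant K k x := fun x => by
    simp only [Nat.add_sub_cancel, dtSecant]; push_cast; ring
  simp only [hvalue]
  push_cast at hlo hhi
  exact ⟨exists_PFeasible_PObj_eq_dtSecant hk hm (by linarith) hhi,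
    fun α hα => dtSecant_le_PObj hk hα⟩

theorem Dstar_value (N K : ℕ) (hN : 1 ≤ N) (hK : 1 ≤ K)
    (m : Fin N → ℝ) (hm : ∀ n, 0 ≤ m n ∧ m n ≤ 1)
    (j : ℕ) (hj2 : 2 ≤ j) (hjN : j ≤ N)
    (hlo : (j : ℝ) - 1 ≤ ∑ n, m n) (hhi : ∑ n, m n ≤ (j : ℝ)) :
    (∃ α : Finset (Fin N) → ℝ, PFeasible m α ∧
      PObj N K α = ((j : ℝ) - ∑ n, m n) * Dt K (j - 1)
        + ((∑ n, m n) - (j : ℝ) + 1) * Dt K j) ∧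
    (∀ α : Finset (Fin N) → ℝ, PFeasible m α →
      ((j : ℝ) - ∑ n, m n) * Dt K (j - 1)
        + ((∑ n, m n) - (j : ℝ) + 1) * Dt K j ≤ PObj N K α) :=
  Dstar_value_general N K m hm j hj2 hlo hhi
end

section
/- Let K ≥ 2, let j be an integer with 2 ≤ j ≤ N, and let m_s be a real number with j − 1 < m_s < j. Then the vector β* defined by β*_{j−1} = j − m_s, β*_j = m_s − (j − 1), and β*_n = 0 for all other n, is the unique optimal solution of the relaxed linear program R(m_s): β* is feasible, every feasible β has objective value at least that of β*, and any feasible β achieving the same objective value equals β*. -/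
/-!
`D̃_n` is the value at `n` of `x ↦ ∑_{i<K} x⁻ⁱ`, which is strictly convex on `(0, ∞)` because
of the term `x⁻¹`; and `D̃_n` strictly decreases. So the line `L` through `(j-1, D̃_{j-1})` and
`(j, D̃_j)` has negative slope, lies below every `D̃_n`, and strictly below all except these two.
For feasible `β`, `∑ β_n D̃_n ≥ ∑ β_n L(n) = L(∑ n β_n) ≥ L(m_s)`, and `β*` attains `L(m_s)`.
Equality forces `β` to vanish off `{j-1, j}` and to have `∑ n β_n = m_s`; together with
`∑ β_n = 1` this pins `β` down to `β*`.
-/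

open Finset

/-- Feasibility for the relaxed linear program `R(m_s)` (here `β n` stands for `β_{n+1}`). -/
def RFeasible (N : ℕ) (ms : ℝ) (β : Fin N → ℝ) : Prop :=
  (∀ n, 0 ≤ β n) ∧ (∑ n, β n) = 1 ∧
  (∑ n : Fin N, ((n : ℕ) + 1 : ℝ) * β n) ≤ ms

/-- Objective value of the relaxed LP: `∑_{n=1}^N β_n · D̃_n`. -/
noncomputable def RObj (N K : ℕ) (β : Fin N → ℝ) : ℝ :=
  ∑ n : Fin N, β n * Dt K ((n : ℕ) + 1)

/-- The vector `β*` with `β*_{j-1} = j - m_s`, `β*_j = m_s - (j-1)`, and all other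
entries zero (recall `β n` stands for `β_{n+1}`). -/
noncomputable def betaStar (N j : ℕ) (ms : ℝ) : Fin N → ℝ := fun n =>
  if (n : ℕ) + 2 = j then (j : ℝ) - ms
  else if (n : ℕ) + 1 = j then ms - ((j : ℝ) - 1)
  else 0

theorem convexOn_finset_sum {𝕜 E β ι : Type*} [Field 𝕜] [LinearOrder 𝕜] [IsStrictOrderedRing 𝕜]
    [AddCommMonoid E] [Module 𝕜 E] [AddCommMonoid β] [PartialOrder β] [IsOrderedAddMonoid β]
    [Module 𝕜 β] [PosSMulMono 𝕜 β] {s : Set E} (hs : Convex 𝕜 s) {t : Finset ι}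
    {f : ι → E → β} (hf : ∀ i ∈ t, ConvexOn 𝕜 s (f i)) :
    ConvexOn 𝕜 s fun x => ∑ i ∈ t, f i x := by
  induction t using Finset.cons_induction with
  | empty => simpa using convexOn_const 0 hs
  | cons i t _ ih =>
    simp_rw [sum_cons]
    exact (hf i (mem_cons_self i t)).add (ih fun j hj => hf j (mem_cons_of_mem hj))

theorem StrictConvexOn.affine_lt_of_notMem_Icc {𝕜 : Type*} [Field 𝕜] [LinearOrder 𝕜]
    [IsStrictOrderedRing 𝕜] {s : Set 𝕜} {f : 𝕜 → 𝕜} (hf : StrictConvexOn 𝕜 s f)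
    {a b x c d : 𝕜} (ha : a ∈ s) (hb : b ∈ s) (hx : x ∈ s) (hab : a < b)
    (hfa : f a = c + d * a) (hfb : f b = c + d * b) (hxab : x ∉ Set.Icc a b) :
    c + d * x < f x := by
  have hslope : (f b - f a) / (b - a) = d := by
    rw [div_eq_iff (sub_ne_zero.2 hab.ne'), hfa, hfb]
    ring
  rcases not_and_or.1 (Set.mem_Icc.not.1 hxab) with hxa | hbx
  · have key := hf.slope_strict_mono_adjacent hx hb (not_le.1 hxa) hab
    rw [hslope, div_lt_iff₀ (sub_pos.2 (not_le.1 hxa))] at key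
    linarith
  · have key := hf.slope_strict_mono_adjacent ha hx hab (not_le.1 hbx)
    rw [hslope, lt_div_iff₀ (sub_pos.2 (not_le.1 hbx))] at key
    linarith

theorem strictConvexOn_Dt {K : ℕ} (hK : 2 ≤ K) :
    StrictConvexOn ℝ (Set.Ioi 0) fun x : ℝ => ∑ i ∈ range K, (1 / x) ^ i := by
  have hzpow : (fun x : ℝ => ∑ i ∈ range K, (1 / x) ^ i) =
      fun x => x ^ (-1 : ℤ) + ∑ i ∈ (range K).erase 1, x ^ (-(i : ℤ)) := by
    funext x
    rw [← add_sum_erase _ _ (mem_range.2 (by omega : 1 < K))]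
    simp [zpow_neg, one_div, inv_pow]
  rw [hzpow]
  exact (strictConvexOn_zpow (by norm_num) (by norm_num)).add_convexOn
    (convexOn_finset_sum (convex_Ioi 0) fun i _ => convexOn_zpow _)

theorem Dt_succ_lt {K ℓ : ℕ} (hK : 2 ≤ K) (hℓ : 1 ≤ ℓ) : Dt K (ℓ + 1) < Dt K ℓ := by
  have hℓ' : (1 : ℝ) ≤ ℓ := by exact_mod_cast hℓ
  apply sum_lt_sum
  · intro i _
    gcongr
    linarith
  · refine ⟨1, mem_range.2 (by omega), ?_⟩
    rw [pow_one, pow_one]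
    gcongr
    linarith

section Secant

variable {K a ℓ : ℕ} {c d : ℝ}

theorem Dt_secant_lt (hK : 2 ≤ K) (ha : 1 ≤ a) (hℓ : 1 ≤ ℓ) (hℓa : ℓ ≠ a) (hℓa' : ℓ ≠ a + 1)
    (hfa : Dt K a = c + d * a) (hfb : Dt K (a + 1) = c + d * (a + 1 : ℕ)) :
    c + d * ℓ < Dt K ℓ := by
  have hpos : ∀ n : ℕ, 1 ≤ n → (n : ℝ) ∈ Set.Ioi 0 := fun n hn =>
    Set.mem_Ioi.2 (by exact_mod_cast hn)
  refine (strictConvexOn_Dt hK).affine_lt_of_notMem_Icc (hpos a ha) (hpos (a + 1) (by omega))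
    (hpos ℓ hℓ) (by exact_mod_cast Nat.lt_succ_self a) hfa hfb ?_
  rw [Set.mem_Icc]
  norm_cast
  omega

theorem Dt_secant_le (hK : 2 ≤ K) (ha : 1 ≤ a) (hℓ : 1 ≤ ℓ) (hfa : Dt K a = c + d * a)
    (hfb : Dt K (a + 1) = c + d * (a + 1 : ℕ)) :
    c + d * ℓ ≤ Dt K ℓ := by
  rcases eq_or_ne ℓ a with rfl | h₁
  · exact hfa.ge
  rcases eq_or_ne ℓ (a + 1) with rfl | h₂
  · exact hfb.ge
  exact (Dt_secant_lt hK ha hℓ h₁ h₂ hfa hfb).le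

end Secant

section AffineMinorant

variable {ι : Type*} [Fintype ι] {x y β : ι → ℝ} {c d m : ℝ}

theorem sum_mul_eq_affine_add (hβ : ∑ i, β i = 1) :
    ∑ i, β i * y i = c + d * m + d * (∑ i, x i * β i - m) + ∑ i, β i * (y i - (c + d * x i)) := by
  simp only [mul_sub, mul_add, sum_sub_distrib, sum_add_distrib, ← sum_mul, hβ]
  simp only [mul_left_comm (β _) d, ← mul_sum, mul_comm (β _) (x _)]
  ring

theorem affine_le_sum_mul (hβ₀ : ∀ i, 0 ≤ β i) (hβ : ∑ i, β i = 1) (hm : ∑ i, x i * β i ≤ m)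
    (hd : d ≤ 0) (hy : ∀ i, c + d * x i ≤ y i) :
    c + d * m ≤ ∑ i, β i * y i := by
  rw [sum_mul_eq_affine_add (x := x) (c := c) (d := d) (m := m) hβ]
  have h₁ : 0 ≤ d * (∑ i, x i * β i - m) := mul_nonneg_of_nonpos_of_nonpos hd (by linarith)
  have h₂ : 0 ≤ ∑ i, β i * (y i - (c + d * x i)) :=
    sum_nonneg fun i _ => mul_nonneg (hβ₀ i) (sub_nonneg.2 (hy i))
  linarith

theorem eq_zero_of_sum_mul_eq_affine (hβ₀ : ∀ i, 0 ≤ β i) (hβ : ∑ i, β i = 1)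
    (hm : ∑ i, x i * β i ≤ m) (hd : d < 0) (hy : ∀ i, c + d * x i ≤ y i)
    (heq : ∑ i, β i * y i = c + d * m) :
    ∑ i, x i * β i = m ∧ ∀ i, c + d * x i < y i → β i = 0 := by
  rw [sum_mul_eq_affine_add (x := x) (c := c) (d := d) (m := m) hβ] at heq
  have h₁ : 0 ≤ d * (∑ i, x i * β i - m) := mul_nonneg_of_nonpos_of_nonpos hd.le (by linarith)
  have h₂ : 0 ≤ ∑ i, β i * (y i - (c + d * x i)) :=
    sum_nonneg fun i _ => mul_nonneg (hβ₀ i) (sub_nonneg.2 (hy i))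
  refine ⟨?_, fun i hi => ?_⟩
  · have : d * (∑ i, x i * β i - m) = 0 := by linarith
    linarith [(mul_eq_zero.1 this).resolve_left hd.ne]
  · have hsum : ∑ i, β i * (y i - (c + d * x i)) = 0 := by linarith
    have := (sum_eq_zero_iff_of_nonneg fun i _ => mul_nonneg (hβ₀ i) (sub_nonneg.2 (hy i))).1
      hsum i (mem_univ i)
    exact (mul_eq_zero.1 this).resolve_right (sub_pos.2 hi).ne'

end AffineMinorant

theorem eq_of_sum_eq_of_support_pair {ι : Type*} [Fintype ι] {x β β' : ι → ℝ} {i₁ i₂ : ι}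
    (hx : x i₁ ≠ x i₂) (hβ : ∀ i, i ≠ i₁ → i ≠ i₂ → β i = 0)
    (hβ' : ∀ i, i ≠ i₁ → i ≠ i₂ → β' i = 0) (hsum : ∑ i, β i = ∑ i, β' i)
    (hmom : ∑ i, x i * β i = ∑ i, x i * β' i) : β = β' := by
  have hi : i₁ ≠ i₂ := fun h => hx (congrArg x h)
  have pair : ∀ g : ι → ℝ, (∀ i, i ≠ i₁ → i ≠ i₂ → g i = 0) → ∑ i, g i = g i₁ + g i₂ :=
    fun g hg => Fintype.sum_eq_add i₁ i₂ hi fun i h => hg i h.1 h.2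
  rw [pair β hβ, pair β' hβ'] at hsum
  rw [pair _ fun i h₁ h₂ => by rw [hβ i h₁ h₂, mul_zero],
    pair _ fun i h₁ h₂ => by rw [hβ' i h₁ h₂, mul_zero]] at hmom
  have h₁ : β i₁ = β' i₁ := by
    have : (x i₁ - x i₂) * (β i₁ - β' i₁) = 0 := by linear_combination hmom - x i₂ * hsum
    linarith [(mul_eq_zero.1 this).resolve_left (sub_ne_zero.2 hx)]
  funext i
  by_cases e₁ : i = i₁
  · rw [e₁, h₁]
  by_cases e₂ : i = i₂
  · subst e₂; linarith
  rw [hβ i e₁ e₂, hβ' i e₁ e₂]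

section BetaStar

variable {N J : ℕ} {ms : ℝ}

theorem betaStar_eq_zero {n : Fin N} (h₁ : (n : ℕ) ≠ J) (h₂ : (n : ℕ) ≠ J + 1) :
    betaStar N (J + 2) ms n = 0 := by
  simp only [betaStar]
  rw [if_neg (by omega), if_neg (by omega)]

theorem betaStar_nonneg (hlo : (J : ℝ) + 1 ≤ ms) (hhi : ms ≤ J + 2) (n : Fin N) :
    0 ≤ betaStar N (J + 2) ms n := by
  simp only [betaStar]
  split_ifs <;> push_cast <;> linarith

theorem sum_betaStar_mul (hJ : J + 2 ≤ N) (g : Fin N → ℝ) :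
    ∑ n, betaStar N (J + 2) ms n * g n =
      ((J : ℝ) + 2 - ms) * g ⟨J, by omega⟩ + (ms - (J + 1)) * g ⟨J + 1, by omega⟩ := by
  rw [Fintype.sum_eq_add ⟨J, by omega⟩ ⟨J + 1, by omega⟩ (by simp [Fin.ext_iff])
    fun n h => by rw [betaStar_eq_zero (Fin.val_ne_iff.2 h.1) (Fin.val_ne_iff.2 h.2), zero_mul]]
  simp only [betaStar, if_pos, if_neg (show J + 1 + 2 ≠ J + 2 by omega), Nat.cast_add,
    Nat.cast_ofNat]
  ring

theorem sum_betaStar (hJ : J + 2 ≤ N) : ∑ n, betaStar N (J + 2) ms n = 1 := by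
  rw [← sum_congr rfl fun n _ => mul_one (betaStar N (J + 2) ms n), sum_betaStar_mul hJ]
  ring

theorem sum_mul_betaStar (hJ : J + 2 ≤ N) :
    ∑ n : Fin N, ((n : ℕ) + 1 : ℝ) * betaStar N (J + 2) ms n = ms := by
  simp_rw [mul_comm _ (betaStar _ _ _ _), sum_betaStar_mul hJ]
  push_cast
  ring

theorem RObj_betaStar (K : ℕ) (hJ : J + 2 ≤ N) :
    RObj N K (betaStar N (J + 2) ms) =
      ((J : ℝ) + 2 - ms) * Dt K (J + 1) + (ms - (J + 1)) * Dt K (J + 2) :=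
  sum_betaStar_mul hJ _

end BetaStar

theorem relaxed_unique_optimum (N K : ℕ) (hK : 2 ≤ K)
    (j : ℕ) (hj2 : 2 ≤ j) (hjN : j ≤ N)
    (ms : ℝ) (hlo : (j : ℝ) - 1 < ms) (hhi : ms < (j : ℝ)) :
    RFeasible N ms (betaStar N j ms) ∧
    (∀ β : Fin N → ℝ, RFeasible N ms β → RObj N K (betaStar N j ms) ≤ RObj N K β) ∧
    (∀ β : Fin N → ℝ, RFeasible N ms β →
      RObj N K β = RObj N K (betaStar N j ms) → β = betaStar N j ms) := by
  obtain ⟨J, rfl⟩ : ∃ J, j = J + 2 := ⟨j - 2, by omega⟩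
  push_cast at hlo hhi
  set i₁ : Fin N := ⟨J, by omega⟩
  set i₂ : Fin N := ⟨J + 1, by omega⟩
  set d := Dt K (J + 2) - Dt K (J + 1)
  set c := Dt K (J + 1) - d * (J + 1)
  have hd : d < 0 := sub_neg.2 (Dt_succ_lt hK (by omega))
  have hfa : Dt K (J + 1) = c + d * (J + 1 : ℕ) := by push_cast; ring
  have hfb : Dt K (J + 1 + 1) = c + d * (J + 1 + 1 : ℕ) := by push_cast; ring
  have hline : ∀ n : Fin N, c + d * ((n : ℕ) + 1 : ℝ) ≤ Dt K ((n : ℕ) + 1) := fun n => by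
    exact_mod_cast Dt_secant_le hK (by omega) (by omega) hfa hfb
  have hstrict : ∀ n : Fin N, n ≠ i₁ → n ≠ i₂ → c + d * ((n : ℕ) + 1 : ℝ) < Dt K ((n : ℕ) + 1) :=
    fun n h₁ h₂ => by
      exact_mod_cast Dt_secant_lt hK (by omega) (by omega) (by simpa [Fin.ext_iff] using h₁)
        (by simpa [Fin.ext_iff] using h₂) hfa hfb
  have hobj : RObj N K (betaStar N (J + 2) ms) = c + d * ms := by
    rw [RObj_betaStar K hjN]
    ring
  have hfeas : RFeasible N ms (betaStar N (J + 2) ms) :=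
    ⟨betaStar_nonneg (by linarith) (by linarith), sum_betaStar hjN, (sum_mul_betaStar hjN).le⟩
  refine ⟨hfeas, fun β ⟨hβ₀, hβ, hm⟩ => hobj ▸ affine_le_sum_mul hβ₀ hβ hm hd.le hline,
    fun β ⟨hβ₀, hβ, hm⟩ heq => ?_⟩
  obtain ⟨hm', hzero⟩ := eq_zero_of_sum_mul_eq_affine hβ₀ hβ hm hd hline (heq.trans hobj)
  exact eq_of_sum_eq_of_support_pair (i₁ := i₁) (i₂ := i₂) (by simp [i₁, i₂])
    (fun n h₁ h₂ => hzero n (hstrict n h₁ h₂))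
    (fun n h₁ h₂ => betaStar_eq_zero (Fin.val_ne_iff.2 h₁) (Fin.val_ne_iff.2 h₂))
    (hβ.trans (sum_betaStar hjN).symm) (hm'.trans (sum_mul_betaStar hjN).symm)
end

section
/- Let N ≥ 2 and let i be an integer with 1 ≤ i ≤ N − 1. Let m = (m_1, …, m_N) satisfy 0 ≤ m_n ≤ 1 for all n and i < m_s < i + 1, where m_s = ∑_{n=1}^N m_n. Then there exist nonnegative real numbers α_S, indexed by the subsets S ⊆ {1, …, N} with |S| = i or |S| = i + 1, such that: (a) ∑_{S : n ∈ S} α_S = m_n for every n ∈ {1, …, N}; (b) ∑_{S : |S| = i} α_S = i + 1 − m_s; and (c) ∑_{S : |S| = i+1} α_S = m_s − i. -/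
/-!
The polytope `{x ∈ [0,1]^N | i ≤ ∑ x ≤ i + 1}` is the convex hull of the indicator vectors of the
sets of size `i` and `i + 1`. The weights of a convex combination representing `m` are the `α_S`;
(b) and (c) then follow from `∑ α_S = 1` and the double count `∑ m = ∑ α_S |S|`.

The hull is reached by induction on the number of coordinates strictly between `0` and `1`. If
`j ≠ l` are two of them, moving mass between `x j` and `x l`, in either direction, until one of them
reaches `0` or `1` exhibits `x` on a segment whose endpoints stay in the polytope and have fewer
fractional coordinates. If `j` is the only one, the other coordinates sum to exactly `i`, and `x`
lies between the vectors with `x j` replaced by `0` and by `1`.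
-/

open Finset

variable {ι : Type*}

lemma mem_segment_add_smul_sub_smul {E : Type*} [AddCommGroup E] [Module ℝ E] (x d : E)
    {a b : ℝ} (ha : 0 ≤ a) (hb : 0 ≤ b) : x ∈ segment ℝ (x + a • d) (x - b • d) := by
  rcases (add_nonneg ha hb).eq_or_lt with hab | hab
  · obtain ⟨rfl, rfl⟩ : a = 0 ∧ b = 0 := ⟨by linarith, by linarith⟩
    simp
  refine ⟨b / (a + b), a / (a + b), by positivity, by positivity, by field_simp; ring, ?_⟩
  match_scalars <;> field_simp <;> ring

section transfer

variable [DecidableEq ι]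

noncomputable def transfer (x : ι → ℝ) (j l : ι) : ι → ℝ :=
  x + min (1 - x j) (x l) • (Pi.single j 1 - Pi.single l 1)

variable {x : ι → ℝ} {j l : ι}

lemma transfer_apply_left (h : j ≠ l) : transfer x j l j = x j + min (1 - x j) (x l) := by
  simp [transfer, h]

lemma transfer_apply_right (h : j ≠ l) : transfer x j l l = x l - min (1 - x j) (x l) := by
  simp [transfer, h.symm, sub_eq_add_neg]

lemma transfer_apply_of_ne {n : ι} (hj : n ≠ j) (hl : n ≠ l) : transfer x j l n = x n := by
  simp [transfer, hj, hl]

lemma transfer_apply_left_eq_one_or_right_eq_zero (h : j ≠ l) :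
    transfer x j l j = 1 ∨ transfer x j l l = 0 := by
  rw [transfer_apply_left h, transfer_apply_right h]
  rcases le_total (1 - x j) (x l) with hle | hle
  · left; rw [min_eq_left hle]; ring
  · right; rw [min_eq_right hle]; ring

lemma mem_segment_transfer (hx : ∀ n, x n ∈ Set.Icc (0 : ℝ) 1) :
    x ∈ segment ℝ (transfer x j l) (transfer x l j) := by
  have key : transfer x l j = x - min (1 - x l) (x j) • (Pi.single j 1 - Pi.single l 1) := by
    rw [transfer, sub_eq_add_neg x, ← smul_neg, neg_sub]
  rw [key]
  exact mem_segment_add_smul_sub_smul _ _ (le_min (by linarith [(hx j).2]) (hx l).1)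
    (le_min (by linarith [(hx l).2]) (hx j).1)

end transfer

section slab

variable [Fintype ι]

def cubeSlab (i : ℕ) : Set (ι → ℝ) :=
  {x | (∀ n, x n ∈ Set.Icc 0 1) ∧ ∑ n, x n ∈ Set.Icc (i : ℝ) (i + 1)}

noncomputable def slabVertices (i : ℕ) : Set (ι → ℝ) :=
  (fun S : Finset ι => (S : Set ι).indicator 1) '' {S | #S = i ∨ #S = i + 1}

noncomputable def fractionalSupport (x : ι → ℝ) : Finset ι := {n | x n ≠ 0 ∧ x n ≠ 1}

lemma sum_transfer [DecidableEq ι] (x : ι → ℝ) (j l : ι) :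
    ∑ n, transfer x j l n = ∑ n, x n := by
  simp [transfer, sum_add_distrib, sum_sub_distrib, ← mul_sum]

lemma transfer_mem_cubeSlab [DecidableEq ι] {i : ℕ} {x : ι → ℝ} {j l : ι} (h : j ≠ l)
    (hx : x ∈ cubeSlab i) : transfer x j l ∈ cubeSlab i := by
  refine ⟨fun n => ?_, (sum_transfer x j l).symm ▸ hx.2⟩
  have hxj := hx.1 j
  have hxl := hx.1 l
  have hle_j := min_le_left (1 - x j) (x l)
  have hle_l := min_le_right (1 - x j) (x l)
  have hnonneg : 0 ≤ min (1 - x j) (x l) := le_min (by linarith [hxj.2]) hxl.1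
  obtain rfl | hj := eq_or_ne n j
  · rw [transfer_apply_left h]; constructor <;> linarith [hxj.1]
  obtain rfl | hl := eq_or_ne n l
  · rw [transfer_apply_right h]; constructor <;> linarith [hxl.2]
  · rw [transfer_apply_of_ne hj hl]; exact hx.1 n

lemma sum_indicator_one (S : Finset ι) : ∑ n, (S : Set ι).indicator (1 : ι → ℝ) n = #S := by
  classical
  simp [Set.indicator_apply]

lemma eq_indicator_of_fractionalSupport_eq_empty {x : ι → ℝ} (h : fractionalSupport x = ∅) :
    x = (({n | x n = 1} : Finset ι) : Set ι).indicator 1 := by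
  ext n
  have hn : n ∉ fractionalSupport x := by simp [h]
  simp only [fractionalSupport, mem_filter, mem_univ, true_and, not_and_or, not_not] at hn
  rcases hn with hn | hn <;> simp [hn]

lemma sum_eq_card_of_fractionalSupport_eq_empty {x : ι → ℝ} (h : fractionalSupport x = ∅) :
    ∑ n, x n = #({n | x n = 1} : Finset ι) := by
  conv_lhs => rw [eq_indicator_of_fractionalSupport_eq_empty h]
  exact sum_indicator_one _

lemma mem_slabVertices_of_fractionalSupport_eq_empty {i : ℕ} {x : ι → ℝ} (hx : x ∈ cubeSlab i)
    (h : fractionalSupport x = ∅) : x ∈ slabVertices i := by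
  refine ⟨_, ?_, (eq_indicator_of_fractionalSupport_eq_empty h).symm⟩
  have hsum := sum_eq_card_of_fractionalSupport_eq_empty h ▸ hx.2
  have hlo : i ≤ #({n | x n = 1} : Finset ι) := by exact_mod_cast hsum.1
  have hhi : #({n | x n = 1} : Finset ι) ≤ i + 1 := by exact_mod_cast hsum.2
  change _ ∨ _
  omega

lemma mem_Ioo_of_mem_fractionalSupport {x : ι → ℝ} (hx : ∀ n, x n ∈ Set.Icc (0 : ℝ) 1) {j : ι}
    (hj : j ∈ fractionalSupport x) : x j ∈ Set.Ioo 0 1 := by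
  simp only [fractionalSupport, mem_filter, mem_univ, true_and] at hj
  exact ⟨(hx j).1.lt_of_ne' hj.1, (hx j).2.lt_of_ne hj.2⟩

lemma fractionalSupport_ssubset {x y : ι → ℝ} {k : ι} (hk : k ∈ fractionalSupport x)
    (hyk : y k = 0 ∨ y k = 1) (hyx : ∀ n, y n ≠ x n → n ∈ fractionalSupport x) :
    fractionalSupport y ⊂ fractionalSupport x := by
  refine (ssubset_iff_of_subset fun n hn => ?_).mpr ⟨k, hk, ?_⟩
  · by_cases h : y n = x n
    · simpa [fractionalSupport, h] using hn
    · exact hyx n h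
  · rcases hyk with h | h <;> simp [fractionalSupport, h]

lemma fractionalSupport_transfer_ssubset [DecidableEq ι] {x : ι → ℝ} {j l : ι} (h : j ≠ l)
    (hj : j ∈ fractionalSupport x) (hl : l ∈ fractionalSupport x) :
    fractionalSupport (transfer x j l) ⊂ fractionalSupport x := by
  have hne : ∀ n, transfer x j l n ≠ x n → n ∈ fractionalSupport x := fun n hn => by
    by_contra hF
    exact hn (transfer_apply_of_ne (by rintro rfl; exact hF hj) (by rintro rfl; exact hF hl))
  rcases transfer_apply_left_eq_one_or_right_eq_zero (x := x) h with h1 | h0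
  · exact fractionalSupport_ssubset hj (Or.inr h1) hne
  · exact fractionalSupport_ssubset hl (Or.inl h0) hne

lemma sum_update [DecidableEq ι] (x : ι → ℝ) (j : ι) (c : ℝ) :
    ∑ n, Function.update x j c n = ∑ n, x n - x j + c := by
  rw [sum_update_of_mem (mem_univ j), sdiff_singleton_eq_erase,
    ← add_sum_erase _ x (mem_univ j)]
  ring

lemma fractionalSupport_update_ssubset [DecidableEq ι] {x : ι → ℝ} {j : ι}
    (hj : j ∈ fractionalSupport x) {c : ℝ} (hc : c = 0 ∨ c = 1) :
    fractionalSupport (Function.update x j c) ⊂ fractionalSupport x := by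
  refine fractionalSupport_ssubset hj (by simpa using hc) fun n hn => ?_
  obtain rfl | h := eq_or_ne n j
  · exact hj
  · exact absurd (Function.update_of_ne h c x) hn

lemma sum_sub_eq_of_fractionalSupport_eq_singleton [DecidableEq ι] {i : ℕ} {x : ι → ℝ} {j : ι}
    (hx : x ∈ cubeSlab i) (hF : fractionalSupport x = {j}) : ∑ n, x n - x j = i := by
  have hj : j ∈ fractionalSupport x := hF ▸ mem_singleton_self j
  have hF0 : fractionalSupport (Function.update x j 0) = ∅ :=
    ssubset_singleton_iff.mp (hF ▸ fractionalSupport_update_ssubset hj (Or.inl rfl))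
  obtain ⟨k, hk⟩ : ∃ k : ℕ, ∑ n, x n - x j = k :=
    ⟨_, by simpa [sum_update] using sum_eq_card_of_fractionalSupport_eq_empty hF0⟩
  have hxj := mem_Ioo_of_mem_fractionalSupport hx.1 hj
  have h1 : i < k + 1 := by exact_mod_cast (show (i : ℝ) < k + 1 by linarith [hx.2.1, hxj.2])
  have h2 : k < i + 1 := by exact_mod_cast (show (k : ℝ) < i + 1 by linarith [hx.2.2, hxj.1])
  rw [hk, show k = i by omega]

lemma exists_segment_of_fractionalSupport_eq_singleton [DecidableEq ι] {i : ℕ} {x : ι → ℝ}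
    {j : ι} (hx : x ∈ cubeSlab i) (hF : fractionalSupport x = {j}) :
    ∃ a ∈ cubeSlab i, ∃ b ∈ cubeSlab i, fractionalSupport a ⊂ fractionalSupport x ∧
      fractionalSupport b ⊂ fractionalSupport x ∧ x ∈ segment ℝ a b := by
  have hj : j ∈ fractionalSupport x := hF ▸ mem_singleton_self j
  have hxj := mem_Ioo_of_mem_fractionalSupport hx.1 hj
  have hrest := sum_sub_eq_of_fractionalSupport_eq_singleton hx hF
  have hslab (c : ℝ) (hc : c ∈ Set.Icc (0 : ℝ) 1) (hs : (i : ℝ) + c ∈ Set.Icc (i : ℝ) (i + 1)) :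
      Function.update x j c ∈ cubeSlab i := by
    refine ⟨fun n => ?_, by rwa [sum_update, hrest]⟩
    obtain rfl | h := eq_or_ne n j
    · simpa using hc
    · simpa [Function.update_of_ne h] using hx.1 n
  refine ⟨_, hslab 0 (by simp) (by simp), _, hslab 1 (by simp) (by simp),
    fractionalSupport_update_ssubset hj (Or.inl rfl),
    fractionalSupport_update_ssubset hj (Or.inr rfl),
    1 - x j, x j, by linarith [hxj.2], hxj.1.le, by ring, ?_⟩
  ext n
  obtain rfl | h := eq_or_ne n j
  · simp
  · simp [Function.update_of_ne h]; ring

lemma exists_segment_of_fractionalSupport_nonempty [DecidableEq ι] {i : ℕ} {x : ι → ℝ}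
    (hx : x ∈ cubeSlab i) (hF : (fractionalSupport x).Nonempty) :
    ∃ a ∈ cubeSlab i, ∃ b ∈ cubeSlab i, fractionalSupport a ⊂ fractionalSupport x ∧
      fractionalSupport b ⊂ fractionalSupport x ∧ x ∈ segment ℝ a b := by
  obtain ⟨j, hj⟩ | ⟨j, hj, l, hl, hjl⟩ := hF.exists_eq_singleton_or_nontrivial
  · exact exists_segment_of_fractionalSupport_eq_singleton hx hj
  · exact ⟨_, transfer_mem_cubeSlab hjl hx, _, transfer_mem_cubeSlab hjl.symm hx,
      fractionalSupport_transfer_ssubset hjl hj hl,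
      fractionalSupport_transfer_ssubset hjl.symm hl hj, mem_segment_transfer hx.1⟩

theorem cubeSlab_subset_convexHull_slabVertices (i : ℕ) :
    cubeSlab i ⊆ convexHull ℝ (slabVertices i : Set (ι → ℝ)) := by
  classical
  intro x hx
  induction hk : #(fractionalSupport x) using Nat.strong_induction_on generalizing x with
  | _ k ih =>
  obtain hF | hF := (fractionalSupport x).eq_empty_or_nonempty
  · exact subset_convexHull ℝ _ (mem_slabVertices_of_fractionalSupport_eq_empty hx hF)
  obtain ⟨a, ha, b, hb, hFa, hFb, hab⟩ := exists_segment_of_fractionalSupport_nonempty hx hF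
  exact (convex_convexHull ℝ _).segment_subset (ih _ (hk ▸ card_lt_card hFa) ha rfl)
    (ih _ (hk ▸ card_lt_card hFb) hb rfl) hab

lemma exists_weights_of_mem_convexHull_slabVertices [DecidableEq ι] {i : ℕ} {x : ι → ℝ}
    (hx : x ∈ convexHull ℝ (slabVertices i)) :
    ∃ α : Finset ι → ℝ, (∀ S, 0 ≤ α S) ∧ (∀ S, #S ≠ i ∧ #S ≠ i + 1 → α S = 0) ∧
      ∑ S, α S = 1 ∧ ∀ n, ∑ S with n ∈ S, α S = x n := by
  set A : Finset (Finset ι) := {S | #S = i ∨ #S = i + 1}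
  set v := fun S : Finset ι => (S : Set ι).indicator (1 : ι → ℝ)
  have hv : v.Injective := fun S T h => coe_injective (Set.indicator_one_inj ℝ h)
  have hA : slabVertices i = (↑(A.image v) : Set (ι → ℝ)) := by simp [slabVertices, A, v]
  rw [hA, mem_convexHull'] at hx
  obtain ⟨w, hw0, hw1, hwx⟩ := hx
  rw [sum_image hv.injOn] at hw1 hwx
  refine ⟨fun S => if S ∈ A then w (v S) else 0, fun S => ?_, fun S hS => ?_, ?_, fun n => ?_⟩
  · dsimp only
    split_ifs with h
    exacts [hw0 _ (mem_image_of_mem v h), le_rfl]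
  · simp [A, hS.1, hS.2]
  · rwa [← sum_filter, filter_mem_eq_inter, univ_inter]
  · rw [← congrFun hwx n]
    simp only [v, Finset.sum_apply, Pi.smul_apply, smul_eq_mul, Set.indicator_apply,
      mem_coe, Pi.one_apply, mul_ite, mul_one, mul_zero]
    rw [← sum_filter, ← sum_filter, filter_filter, filter_filter]
    simp [A, and_comm]

lemma sum_eq_sum_card_eq_add_sum_card_eq_succ {i : ℕ} {g : Finset ι → ℝ}
    (hg : ∀ S, #S ≠ i ∧ #S ≠ i + 1 → g S = 0) :
    ∑ S, g S = ∑ S with #S = i, g S + ∑ S with #S = i + 1, g S := by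
  rw [sum_filter, sum_filter, ← sum_add_distrib]
  refine sum_congr rfl fun S _ => ?_
  by_cases h : #S = i
  · simp [h]
  by_cases h' : #S = i + 1
  · simp [h']
  · simp [h, h', hg S ⟨h, h'⟩]

lemma sum_sum_filter_mem_eq_sum_mul_card [DecidableEq ι] (α : Finset ι → ℝ) :
    ∑ n, ∑ S with n ∈ S, α S = ∑ S, α S * #S := by
  simp_rw [sum_filter]
  rw [sum_comm]
  simp [mul_comm]

lemma sum_card_eq_and_sum_card_eq_succ {i : ℕ} {α : Finset ι → ℝ}
    (hα : ∀ S, #S ≠ i ∧ #S ≠ i + 1 → α S = 0) (hα1 : ∑ S, α S = 1) :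
    ∑ S with #S = i, α S = i + 1 - ∑ S, α S * #S ∧
      ∑ S with #S = i + 1, α S = ∑ S, α S * #S - i := by
  have hmass : ∑ S with #S = i, α S + ∑ S with #S = i + 1, α S = 1 :=
    (sum_eq_sum_card_eq_add_sum_card_eq_succ hα).symm.trans hα1
  have hsize := sum_eq_sum_card_eq_add_sum_card_eq_succ (i := i) (g := fun S => α S * #S)
    fun S hS => by simp [hα S hS]
  have hi : ∑ S with #S = i, α S * #S = i * ∑ S with #S = i, α S := by
    rw [mul_sum]
    exact sum_congr rfl fun S hS => by rw [(mem_filter.mp hS).2, mul_comm]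
  have hi1 : ∑ S with #S = i + 1, α S * #S = (i + 1) * ∑ S with #S = i + 1, α S := by
    rw [mul_sum]
    exact sum_congr rfl fun S hS => by rw [(mem_filter.mp hS).2]; push_cast; ring
  rw [hi, hi1] at hsize
  constructor
  · linear_combination ((i : ℝ) + 1) * hmass + hsize
  · linear_combination -(i : ℝ) * hmass - hsize

end slab

theorem exists_feasible_placement_general (N i : ℕ)
    (m : Fin N → ℝ) (hm : ∀ n, 0 ≤ m n ∧ m n ≤ 1)
    (hlo : (i : ℝ) < ∑ n, m n) (hhi : ∑ n, m n < (i : ℝ) + 1) :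
    ∃ α : Finset (Fin N) → ℝ,
      (∀ S : Finset (Fin N), 0 ≤ α S) ∧
      (∀ S : Finset (Fin N), S.card ≠ i ∧ S.card ≠ i + 1 → α S = 0) ∧
      (∀ n : Fin N,
        (∑ S ∈ Finset.univ.filter (fun S : Finset (Fin N) => n ∈ S), α S) = m n) ∧
      (∑ S ∈ Finset.univ.filter (fun S : Finset (Fin N) => S.card = i), α S)
        = (i : ℝ) + 1 - ∑ n, m n ∧
      (∑ S ∈ Finset.univ.filter (fun S : Finset (Fin N) => S.card = i + 1), α S)
        = (∑ n, m n) - (i : ℝ) := by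
  obtain ⟨α, hα0, hαsupp, hα1, hαm⟩ := exists_weights_of_mem_convexHull_slabVertices
    (cubeSlab_subset_convexHull_slabVertices i ⟨hm, hlo.le, hhi.le⟩)
  have hsum : ∑ n, m n = ∑ S, α S * #S := by
    rw [← sum_sum_filter_mem_eq_sum_mul_card]
    exact sum_congr rfl fun n _ => (hαm n).symm
  rw [hsum]
  exact ⟨α, hα0, hαsupp, hαm, sum_card_eq_and_sum_card_eq_succ hαsupp hα1⟩

theorem exists_feasible_placement (N i : ℕ) (hN : 2 ≤ N) (hi1 : 1 ≤ i) (hiN : i ≤ N - 1)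
    (m : Fin N → ℝ) (hm : ∀ n, 0 ≤ m n ∧ m n ≤ 1)
    (hlo : (i : ℝ) < ∑ n, m n) (hhi : ∑ n, m n < (i : ℝ) + 1) :
    ∃ α : Finset (Fin N) → ℝ,
      (∀ S : Finset (Fin N), 0 ≤ α S) ∧
      (∀ S : Finset (Fin N), S.card ≠ i ∧ S.card ≠ i + 1 → α S = 0) ∧
      (∀ n : Fin N,
        (∑ S ∈ Finset.univ.filter (fun S : Finset (Fin N) => n ∈ S), α S) = m n) ∧
      (∑ S ∈ Finset.univ.filter (fun S : Finset (Fin N) => S.card = i), α S)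
        = (i : ℝ) + 1 - ∑ n, m n ∧
      (∑ S ∈ Finset.univ.filter (fun S : Finset (Fin N) => S.card = i + 1), α S)
        = (∑ n, m n) - (i : ℝ) :=
  exists_feasible_placement_general N i m hm hlo hhi
end

section
/- Let 0 ≤ m_n ≤ 1 for n = 1, 2, 3 with m_s = m_1 + m_2 + m_3 satisfying 2 ≤ m_s ≤ 3. Then the assignment α_1 = α_2 = α_3 = 0, α_{12} = 1 − m_3, α_{13} = 1 − m_2, α_{23} = 1 − m_1, α_{123} = m_s − 2 is feasible for the N = 3, K = 3 placement linear program with storage vector (m_1, m_2, m_3); its objective value equals 85/36 − (11/36)·m_s; and every feasible point has objective value at least 85/36 − (11/36)·m_s. -/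
/-- Feasibility for the `N = 3`, `K = 3` placement linear program with storage
vector `(m₁, m₂, m₃)`. -/
def Feas3 (m1 m2 m3 a1 a2 a3 a12 a13 a23 a123 : ℝ) : Prop :=
  0 ≤ a1 ∧ 0 ≤ a2 ∧ 0 ≤ a3 ∧ 0 ≤ a12 ∧ 0 ≤ a13 ∧ 0 ≤ a23 ∧ 0 ≤ a123 ∧
  a1 + a2 + a3 + a12 + a13 + a23 + a123 = 1 ∧
  a1 + a12 + a13 + a123 ≤ m1 ∧
  a2 + a12 + a23 + a123 ≤ m2 ∧
  a3 + a13 + a23 + a123 ≤ m3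

/-- Objective of the `N = 3`, `K = 3` placement linear program. -/
noncomputable def Obj3 (a1 a2 a3 a12 a13 a23 a123 : ℝ) : ℝ :=
  3 * (a1 + a2 + a3) + 7 / 4 * (a12 + a13 + a23) + 13 / 9 * a123

/-! The lower bound is weak LP duality: weighting the normalization constraint by `85/36` and
each storage constraint by `11/36` reproduces the objective up to `17/18 (α₁ + α₂ + α₃) ≥ 0`.
The reduced costs of the pairs and of the triple vanish, so the proposed point, which uses only
those and fills every storage constraint, attains the bound. -/

theorem obj3_eq_dual_combination (a1 a2 a3 a12 a13 a23 a123 : ℝ) :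
    Obj3 a1 a2 a3 a12 a13 a23 a123 =
      85 / 36 * (a1 + a2 + a3 + a12 + a13 + a23 + a123)
        - 11 / 36 * ((a1 + a12 + a13 + a123) + (a2 + a12 + a23 + a123) + (a3 + a13 + a23 + a123))
        + 17 / 18 * (a1 + a2 + a3) := by
  unfold Obj3
  ring

theorem Feas3.dual_bound_le_obj3 {m1 m2 m3 a1 a2 a3 a12 a13 a23 a123 : ℝ}
    (h : Feas3 m1 m2 m3 a1 a2 a3 a12 a13 a23 a123) :
    85 / 36 - 11 / 36 * (m1 + m2 + m3) ≤ Obj3 a1 a2 a3 a12 a13 a23 a123 := by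
  obtain ⟨h1, h2, h3, -, -, -, -, hsum, c1, c2, c3⟩ := h
  rw [obj3_eq_dual_combination, hsum]
  linarith

theorem feas3_pairs_and_triple {m1 m2 m3 : ℝ} (h1 : m1 ≤ 1) (h2 : m2 ≤ 1) (h3 : m3 ≤ 1)
    (hs : 2 ≤ m1 + m2 + m3) :
    Feas3 m1 m2 m3 0 0 0 (1 - m3) (1 - m2) (1 - m1) (m1 + m2 + m3 - 2) := by
  refine ⟨le_rfl, le_rfl, le_rfl, ?_, ?_, ?_, ?_, ?_, ?_, ?_, ?_⟩ <;> linarith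

theorem obj3_pairs_and_triple (m1 m2 m3 : ℝ) :
    Obj3 0 0 0 (1 - m3) (1 - m2) (1 - m1) (m1 + m2 + m3 - 2)
      = 85 / 36 - 11 / 36 * (m1 + m2 + m3) := by
  unfold Obj3
  ring

theorem regime3_general (m1 m2 m3 : ℝ)
    (h1hi : m1 ≤ 1) (h2hi : m2 ≤ 1) (h3hi : m3 ≤ 1)
    (hlo : 2 ≤ m1 + m2 + m3) :
    Feas3 m1 m2 m3 0 0 0 (1 - m3) (1 - m2) (1 - m1) (m1 + m2 + m3 - 2) ∧
    Obj3 0 0 0 (1 - m3) (1 - m2) (1 - m1) (m1 + m2 + m3 - 2)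
      = 85 / 36 - 11 / 36 * (m1 + m2 + m3) ∧
    ∀ a1 a2 a3 a12 a13 a23 a123 : ℝ, Feas3 m1 m2 m3 a1 a2 a3 a12 a13 a23 a123 →
      85 / 36 - 11 / 36 * (m1 + m2 + m3) ≤ Obj3 a1 a2 a3 a12 a13 a23 a123 :=
  ⟨feas3_pairs_and_triple h1hi h2hi h3hi hlo, obj3_pairs_and_triple m1 m2 m3,
    fun _ _ _ _ _ _ _ h => h.dual_bound_le_obj3⟩

theorem regime3 (m1 m2 m3 : ℝ)
    (h1lo : 0 ≤ m1) (h1hi : m1 ≤ 1) (h2lo : 0 ≤ m2) (h2hi : m2 ≤ 1)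
    (h3lo : 0 ≤ m3) (h3hi : m3 ≤ 1)
    (hlo : 2 ≤ m1 + m2 + m3) (hhi : m1 + m2 + m3 ≤ 3) :
    Feas3 m1 m2 m3 0 0 0 (1 - m3) (1 - m2) (1 - m1) (m1 + m2 + m3 - 2) ∧
    Obj3 0 0 0 (1 - m3) (1 - m2) (1 - m1) (m1 + m2 + m3 - 2)
      = 85 / 36 - 11 / 36 * (m1 + m2 + m3) ∧
    ∀ a1 a2 a3 a12 a13 a23 a123 : ℝ, Feas3 m1 m2 m3 a1 a2 a3 a12 a13 a23 a123 →
      85 / 36 - 11 / 36 * (m1 + m2 + m3) ≤ Obj3 a1 a2 a3 a12 a13 a23 a123 :=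
  regime3_general m1 m2 m3 h1hi h2hi h3hi hlo
end
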